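/- arXiv:1903.07380 — 2 statements merged into one kernel-verified Lean document; each statement's English description precedes it below -/
import Mathlib

section
/- Let k be a field of characteristic 2 and A = k[x]/(x^n). The Lie algebra Der(A) of all derivations of A has derived length at most two, i.e., [[Der(A), Der(A)], [Der(A), Der(A)]] = 0. -/
open Polynomial

/-! In characteristic 2 the second derivative of every polynomial vanishes, so every derivation
kills the values `p'(x)` of derivatives at a generator `x` of `A`. If `D x = f(x)` and `E x = g(x)`,
then `⁅D, E⁆ x = (g'f - f'g)(x) = (fg)'(x)`, so all commutators lie in the Lie ideal of derivations
whose value at `x` has this form; the bracket of two such derivations vanishes at `x`, hence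
everywhere. -/

namespace Polynomial

variable {R : Type*} [CommRing R] [CharP R 2]

theorem derivative_derivative_eq_zero_of_charTwo (p : R[X]) : derivative (derivative p) = 0 := by
  ext i
  have h := coeff_iterate_derivative (k := 2) p i
  rw [Function.iterate_succ_apply, Function.iterate_one] at h
  have heven : 2 ∣ (i + 2).descFactorial 2 := by
    rw [Nat.descFactorial_succ, Nat.descFactorial_one, mul_comm]
    exact (Nat.even_mul_pred_self (i + 2)).two_dvd
  rw [h, coeff_zero, nsmul_eq_mul, (CharP.cast_eq_zero_iff R 2 _).mpr heven, zero_mul]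

theorem derivative_mul_sub_derivative_mul_of_charTwo (f g : R[X]) :
    derivative g * f - derivative f * g = derivative (f * g) := by
  rw [CharTwo.sub_eq_add, derivative_mul]
  ring

end Polynomial

theorem Ideal.Quotient.adjoin_mk_X_eq_top {k : Type*} [CommRing k] (I : Ideal k[X]) :
    Algebra.adjoin k {Ideal.Quotient.mk I X} = ⊤ := by
  have := Algebra.adjoin_image k (Ideal.Quotient.mkₐ k I) {X}
  rw [Set.image_singleton, Ideal.Quotient.mkₐ_eq_mk, adjoin_X, Algebra.map_top] at this
  rw [this, AlgHom.range_eq_top]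
  exact Ideal.Quotient.mkₐ_surjective k I

section

variable (k : Type*) {A : Type*} [CommRing k] [CommRing A] [Algebra k A]

noncomputable def derivativeValues (x : A) : Submodule k A :=
  LinearMap.range ((aeval x).toLinearMap ∘ₗ derivative)

variable {k}

theorem mem_derivativeValues {x a : A} :
    a ∈ derivativeValues k x ↔ ∃ p : k[X], aeval x (derivative p) = a :=
  Iff.rfl

variable [CharP k 2] {x : A}

theorem Derivation.map_eq_zero_of_mem_derivativeValues (D : Derivation k A A) {a : A}
    (ha : a ∈ derivativeValues k x) : D a = 0 := by
  obtain ⟨p, rfl⟩ := mem_derivativeValues.mp ha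
  rw [Derivation.map_aeval, derivative_derivative_eq_zero_of_charTwo, map_zero, zero_smul]

theorem Derivation.lie_apply_mem_derivativeValues (hx : Algebra.adjoin k {x} = ⊤)
    (D E : Derivation k A A) : ⁅D, E⁆ x ∈ derivativeValues k x := by
  have hpoly : ∀ a : A, ∃ p : k[X], aeval x p = a := fun a => by
    simpa [Algebra.adjoin_singleton_eq_range_aeval] using hx.ge (Algebra.mem_top (x := a))
  obtain ⟨f, hf⟩ := hpoly (D x)
  obtain ⟨g, hg⟩ := hpoly (E x)
  refine mem_derivativeValues.mpr ⟨f * g, ?_⟩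
  rw [Derivation.commutator_apply, ← hf, ← hg, Derivation.map_aeval, Derivation.map_aeval,
    ← hf, ← hg, smul_eq_mul, smul_eq_mul, ← map_mul, ← map_mul, ← map_sub,
    derivative_mul_sub_derivative_mul_of_charTwo]

noncomputable def derivativeValuesLieIdeal (hx : Algebra.adjoin k {x} = ⊤) :
    LieIdeal k (Derivation k A A) where
  carrier := {D | D x ∈ derivativeValues k x}
  add_mem' hD hE := (derivativeValues k x).add_mem hD hE
  zero_mem' := (derivativeValues k x).zero_mem
  smul_mem' c _ hD := (derivativeValues k x).smul_mem c hD
  lie_mem _ := Derivation.lie_apply_mem_derivativeValues hx _ _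

theorem Derivation.lie_eq_zero_of_apply_mem_derivativeValues (hx : Algebra.adjoin k {x} = ⊤)
    {D E : Derivation k A A} (hD : D x ∈ derivativeValues k x) (hE : E x ∈ derivativeValues k x) :
    ⁅D, E⁆ = 0 :=
  Derivation.ext_of_adjoin_eq_top {x} hx fun _ hy => by
    rw [Set.mem_singleton_iff.mp hy, Derivation.commutator_apply,
      D.map_eq_zero_of_mem_derivativeValues hE, E.map_eq_zero_of_mem_derivativeValues hD,
      sub_zero, Derivation.zero_apply]

theorem Derivation.derivedSeries_two_eq_bot_of_adjoin_singleton_eq_top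
    (hx : Algebra.adjoin k {x} = ⊤) : LieAlgebra.derivedSeries k (Derivation k A A) 2 = ⊥ := by
  have hderived : ⁅(⊤ : LieIdeal k (Derivation k A A)), ⊤⁆ ≤ derivativeValuesLieIdeal hx :=
    (LieSubmodule.lie_le_iff _ _ _).mpr fun D _ E _ => lie_apply_mem_derivativeValues hx D E
  rw [LieAlgebra.derivedSeries_def, LieAlgebra.derivedSeriesOfIdeal_succ,
    LieAlgebra.derivedSeriesOfIdeal_succ, LieAlgebra.derivedSeriesOfIdeal_zero,
    LieSubmodule.lie_eq_bot_iff]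
  exact fun D hD E hE => lie_eq_zero_of_apply_mem_derivativeValues hx (hderived hD) (hderived hE)

end

/-- Over a field of characteristic 2, the Lie algebra of all derivations of `k[x]/(xⁿ)` has
derived length at most two: the second term of its derived series vanishes. -/
theorem stmt7 {k : Type*} [Field k] [CharP k 2] (n : ℕ) :
    LieAlgebra.derivedSeries k
      (Derivation k (k[X] ⧸ Ideal.span {(X : k[X]) ^ n})
        (k[X] ⧸ Ideal.span {(X : k[X]) ^ n})) 2 = ⊥ :=
  Derivation.derivedSeries_two_eq_bot_of_adjoin_singleton_eq_top
    (Ideal.Quotient.adjoin_mk_X_eq_top _)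
end

section
/- Let k be a field of characteristic p ≥ 3 and A = k[x]/(x^p). Then the Lie algebra Der(A) (the Witt algebra) is not solvable. -/
/-!
The derivations `∂`, `x ∂`, `x² ∂` of `k[x]/(x^p)` (where `∂ = d/dx` descends to the quotient
because `p = 0` in `k`) span a copy of `sl₂`: with `e = ∂`, `h = -2x ∂`, `f = -x² ∂` one has
`⁅e, f⁆ = h`, `⁅h, e⁆ = 2e`, `⁅h, f⁆ = -2f`, and `h ≠ 0` as soon as `2 ≠ 0` and `p ≥ 2`.
When `2` is invertible an `sl₂`-triple is perfect, `e = ½⁅h, e⁆`, `f = -½⁅h, f⁆`, so `h`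
lies in every term of the derived series, which therefore never reaches `⊥`.
-/

open Polynomial

namespace IsSl2Triple

variable {R L : Type*} [CommRing R] [LieRing L] [LieAlgebra R L] {h e f : L}

theorem mem_derivedSeries [Invertible (2 : R)] (ht : IsSl2Triple h e f) (n : ℕ) :
    h ∈ LieAlgebra.derivedSeries R L n ∧ e ∈ LieAlgebra.derivedSeries R L n ∧
      f ∈ LieAlgebra.derivedSeries R L n := by
  induction n with
  | zero => simp
  | succ n ih =>
    obtain ⟨hh, he, hf⟩ := ih
    rw [LieAlgebra.derivedSeries_def, LieAlgebra.derivedSeriesOfIdeal_succ,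
      ← LieAlgebra.derivedSeries_def]
    have half_smul (x : L) : x = (⅟2 : R) • (2 • x) := by
      rw [← Nat.cast_smul_eq_nsmul R, smul_smul, Nat.cast_ofNat, invOf_mul_self, one_smul]
    refine ⟨ht.lie_e_f ▸ LieSubmodule.lie_mem_lie he hf, ?_, ?_⟩
    · rw [half_smul e, ← ht.lie_h_e_nsmul]
      exact SMulMemClass.smul_mem _ (LieSubmodule.lie_mem_lie hh he)
    · rw [half_smul f, ← neg_neg (2 • f), ← ht.lie_h_f_nsmul, ← lie_neg]
      exact SMulMemClass.smul_mem _ (LieSubmodule.lie_mem_lie hh (neg_mem hf))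

theorem not_isSolvable [Invertible (2 : R)] (ht : IsSl2Triple h e f) :
    ¬ LieAlgebra.IsSolvable L := by
  intro hs
  obtain ⟨n, hn⟩ := (LieAlgebra.isSolvable_iff R L).mp hs
  exact ht.h_ne_zero <| (LieSubmodule.mem_bot h).mp (hn ▸ (ht.mem_derivedSeries n).1)

end IsSl2Triple

namespace Derivation

variable {R A : Type*} [CommRing R] [CommRing A] [Algebra R A]

theorem smul_lie_smul (D : Derivation R A A) (a b : A) :
    ⁅a • D, b • D⁆ = (a * D b - b * D a) • D := by
  ext x
  simp only [commutator_apply, smul_apply, leibniz, smul_eq_mul]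
  ring

theorem isSl2Triple_of_apply_eq_one (D : Derivation R A A) {x : A} (hx : D x = 1)
    (h2x : 2 * x ≠ 0) : IsSl2Triple (-(2 * x) • D) D (-x ^ 2 • D) := by
  have hD2 : D 2 = 0 := by simpa using D.map_natCast 2
  refine ⟨fun h0 => h2x ?_, ?_, ?_, ?_⟩
  · simpa [hx] using congr($h0 x)
  · nth_rw 1 [← one_smul A D]
    rw [smul_lie_smul]
    simp [leibniz_pow, hx]
  · nth_rw 2 [← one_smul A D]
    rw [smul_lie_smul]
    simp only [map_one_eq_zero, map_neg, leibniz, hx, hD2, smul_eq_mul, mul_zero, mul_one,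
      add_zero, mul_neg, one_mul, sub_neg_eq_add, zero_add]
    module
  · rw [smul_lie_smul]
    simp only [map_neg, leibniz_pow, leibniz, hx, hD2, Nat.add_one_sub_one, pow_one, smul_eq_mul,
      mul_one, mul_zero, add_zero, nsmul_eq_mul, Nat.cast_ofNat, mul_neg, neg_mul, neg_neg]
    module

end Derivation

theorem Polynomial.X_pow_dvd_derivative {R : Type*} [CommRing R] {p : ℕ} [CharP R p] {f : R[X]}
    (hf : X ^ p ∣ f) : X ^ p ∣ derivative f := by
  obtain ⟨g, rfl⟩ := hf
  rw [derivative_mul, derivative_X_pow, CharP.cast_eq_zero, map_zero, zero_mul, zero_mul,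
    zero_add]
  exact dvd_mul_right _ _

abbrev TruncatedPolynomial (R : Type*) [CommRing R] (p : ℕ) : Type _ :=
  R[X] ⧸ Ideal.span {(X : R[X]) ^ p}

namespace TruncatedPolynomial

variable {R : Type*} [CommRing R] {p : ℕ}

theorem mk_eq_zero_iff {f : R[X]} :
    Ideal.Quotient.mk (Ideal.span {(X : R[X]) ^ p}) f = 0 ↔ X ^ p ∣ f := by
  rw [Ideal.Quotient.eq_zero_iff_mem, Ideal.mem_span_singleton]

theorem two_mul_mk_X_ne_zero (h2 : (2 : R) ≠ 0) (hp : 2 ≤ p) :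
    (2 * Ideal.Quotient.mk (Ideal.span {(X : R[X]) ^ p}) X : TruncatedPolynomial R p) ≠ 0 := by
  rw [← map_ofNat (Ideal.Quotient.mk _) 2, ← map_mul, Ne, mk_eq_zero_iff, X_pow_dvd_iff]
  exact fun h => h2 (by simpa using h 1 hp)

variable [CharP R p]

theorem mk_derivative_eq_zero {f : R[X]} (hf : Ideal.Quotient.mk (Ideal.span {X ^ p}) f = 0) :
    Ideal.Quotient.mk (Ideal.span {(X : R[X]) ^ p}) (derivative f) = 0 :=
  mk_eq_zero_iff.mpr (X_pow_dvd_derivative (mk_eq_zero_iff.mp hf))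

variable (R p) in
noncomputable def derivative' :
    Derivation R (TruncatedPolynomial R p) (TruncatedPolynomial R p) :=
  Derivation.liftOfSurjective (Ideal.Quotient.mkₐ_surjective R _) (d := Polynomial.derivative')
    fun _ => mk_derivative_eq_zero

theorem derivative'_mk (f : R[X]) :
    derivative' R p (Ideal.Quotient.mk _ f) = Ideal.Quotient.mk _ (derivative f) := by
  change derivative' R p (Ideal.Quotient.mkₐ R _ f) =
    Ideal.Quotient.mkₐ R _ (Polynomial.derivative' f)
  exact Derivation.liftOfSurjective_apply (Ideal.Quotient.mkₐ_surjective R _)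
    (d := Polynomial.derivative') (fun _ => mk_derivative_eq_zero) f

end TruncatedPolynomial

/-- Over a field of characteristic `p ≥ 3`, the Lie algebra of derivations of `k[x]/(x^p)`
(the Witt algebra) is not solvable. -/
theorem stmt9 {k : Type*} [Field k] (p : ℕ) [CharP k p] (hp : 3 ≤ p) :
    ¬ LieAlgebra.IsSolvable
      (Derivation k (k[X] ⧸ Ideal.span {(X : k[X]) ^ p})
        (k[X] ⧸ Ideal.span {(X : k[X]) ^ p})) := by
  have h2 : (2 : k) ≠ 0 := Ring.two_ne_zero (by rw [ringChar.eq k p]; omega)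
  have : Invertible (2 : k) := invertibleOfNonzero h2
  have hX : TruncatedPolynomial.derivative' k p (Ideal.Quotient.mk _ X) = 1 := by
    rw [TruncatedPolynomial.derivative'_mk, derivative_X, map_one]
  exact ((TruncatedPolynomial.derivative' k p).isSl2Triple_of_apply_eq_one hX
    (TruncatedPolynomial.two_mul_mk_X_ne_zero h2 (by omega))).not_isSolvable (R := k)
end
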